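/- arXiv:1804.05516 — 2 statements merged into one kernel-verified Lean document; each statement's English description precedes it below -/
import Mathlib

section
/- Let q = p^m with p an odd prime and m odd. Then the number of non-square elements w ∈ GF(q)* with Tr_{q/p}(w) = 0 equals (p^{m-1} - 1)/2, and the number of non-squares with Tr_{q/p}(w) ≠ 0 equals p^{m-1}(p-1)/2. -/
/-!
Fix a nonsquare `c` of `GF(p)`. Its norm from `GF(q)` is `c ^ m`, again a nonsquare since `m` is
odd, so `c` stays a nonsquare in `GF(q)`. Multiplication by `c` therefore exchanges the nonzero
squares and the nonsquares of `GF(q)`, while it multiplies the trace by `c`; so it preserves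
both `{w ≠ 0 | Tr w = 0}` and `{w | Tr w ≠ 0}`, and exactly half of each set consists of
nonsquares. The trace is a surjective linear form, so its kernel has `p ^ (m - 1)` elements.
-/

lemma Nat.card_subtype_add_card_not {α : Type*} [Finite α] (P : α → Prop) :
    Nat.card {x // P x} + Nat.card {x // ¬P x} = Nat.card α := by
  have := Set.ncard_add_ncard_compl {x | P x}
  rwa [← Nat.card_coe_set_eq, ← Nat.card_coe_set_eq] at this

lemma Nat.card_subtype_eq_card_and_add_card_and_not {α : Type*} [Finite α] (P Q : α → Prop) :
    Nat.card {x // P x} = Nat.card {x // P x ∧ Q x} + Nat.card {x // P x ∧ ¬Q x} := by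
  classical
  have := Fintype.ofFinite α
  simp only [Nat.card_eq_fintype_card, Fintype.card_subtype]
  rw [← Finset.filter_filter, ← Finset.filter_filter]
  exact (Finset.card_filter_add_card_filter_not _).symm

lemma Nat.card_subtype_ne_and_add_one {α : Type*} [Finite α] {P : α → Prop} {a : α}
    (ha : P a) : Nat.card {x // x ≠ a ∧ P x} + 1 = Nat.card {x // P x} := by
  have := Set.ncard_sdiff_singleton_add_one (s := {x | P x}) ha
  rw [← Nat.card_coe_set_eq, ← Nat.card_coe_set_eq] at this
  refine (congrArg (· + 1) ?_).trans this
  exact Nat.card_congr (Equiv.subtypeEquivRight fun x ↦ by simp [and_comm])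

lemma Nat.card_subtype_ne_and_of_not {α : Type*} {P : α → Prop} {a : α} (ha : ¬P a) :
    Nat.card {x // x ≠ a ∧ P x} = Nat.card {x // P x} :=
  Nat.card_congr <| Equiv.subtypeEquivRight fun _ ↦
    ⟨And.right, fun hx ↦ ⟨by rintro rfl; exact ha hx, hx⟩⟩

lemma isSquare_of_isSquare_pow_of_odd {G₀ : Type*} [CommGroupWithZero G₀] {c : G₀} {n : ℕ}
    (hn : Odd n) (h : IsSquare (c ^ n)) : IsSquare c := by
  rcases eq_or_ne c 0 with rfl | hc
  · exact IsSquare.zero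
  obtain ⟨k, rfl⟩ := hn
  have : c ^ (2 * k + 1) / (c ^ k) ^ 2 = c := by
    rw [pow_succ, pow_mul', mul_div_cancel_left₀ _ (pow_ne_zero 2 (pow_ne_zero k hc))]
  exact this ▸ h.div (IsSquare.sq _)

lemma not_isSquare_algebraMap_of_odd_finrank {K L : Type*} [Field K] [Field L] [Algebra K L]
    [FiniteDimensional K L] (hodd : Odd (Module.finrank K L)) {c : K} (hc : ¬IsSquare c) :
    ¬IsSquare (algebraMap K L c) := fun h ↦
  hc <| isSquare_of_isSquare_pow_of_odd hodd <| Algebra.norm_algebraMap (S := L) c ▸ h.map _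

section Trace

variable (K L : Type*) [Field K] [Finite K] [Field L] [Finite L] [Algebra K L]

lemma Algebra.card_trace_eq_zero_mul_card :
    Nat.card {w : L // Algebra.trace K L w = 0} * Nat.card K = Nat.card L := by
  have : FiniteDimensional K L := Module.Finite.of_finite
  have h := (Algebra.trace K L).toAddMonoidHom.ker.card_mul_index
  rwa [AddSubgroup.index_ker, AddMonoidHom.range_eq_top.mpr (Algebra.trace_surjective K L),
    AddSubgroup.card_top] at h

lemma Algebra.card_trace_ne_zero :
    Nat.card {w : L // Algebra.trace K L w ≠ 0} =
      Nat.card {w : L // Algebra.trace K L w = 0} * (Nat.card K - 1) := by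
  have h := Nat.card_subtype_add_card_not fun w : L ↦ Algebra.trace K L w = 0
  rw [← Algebra.card_trace_eq_zero_mul_card K L] at h
  rw [Nat.mul_sub_one, ← h, Nat.add_sub_cancel_left]

end Trace

namespace FiniteField

variable {F : Type*} [Field F] [Fintype F]

lemma isSquare_mul_iff_not_isSquare {c x : F} (hc : ¬IsSquare c) (hx : x ≠ 0) :
    IsSquare (c * x) ↔ ¬IsSquare x := by
  classical
  have hc0 : c ≠ 0 := fun h ↦ hc (h ▸ IsSquare.zero)
  rw [← quadraticChar_one_iff_isSquare (mul_ne_zero hc0 hx), map_mul,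
    quadraticChar_neg_one_iff_not_isSquare.mpr hc, ← quadraticChar_neg_one_iff_not_isSquare]
  rcases quadraticChar_dichotomy hx with h | h <;> simp [h]

lemma two_mul_card_nonsquare_of_mul_invariant {c : F} (hc : ¬IsSquare c) (P : F → Prop)
    (hP : ∀ x, P (c * x) ↔ P x) :
    2 * Nat.card {w : F // w ≠ 0 ∧ ¬IsSquare w ∧ P w} =
      Nat.card {w : F // w ≠ 0 ∧ P w} := by
  have hc0 : c ≠ 0 := fun h ↦ hc (h ▸ IsSquare.zero)
  have swap :
      {w : F // w ≠ 0 ∧ ¬IsSquare w ∧ P w} ≃ {w : F // w ≠ 0 ∧ IsSquare w ∧ P w} :=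
    (Equiv.mulLeft₀ c hc0).subtypeEquiv fun w ↦ by
      by_cases hw : w = 0
      · simp [hw]
      · simp [hw, hc0, isSquare_mul_iff_not_isSquare hc hw, hP]
  have split : Nat.card {w : F // w ≠ 0 ∧ P w} =
      Nat.card {w : F // w ≠ 0 ∧ IsSquare w ∧ P w} +
        Nat.card {w : F // w ≠ 0 ∧ ¬IsSquare w ∧ P w} := by
    rw [Nat.card_subtype_eq_card_and_add_card_and_not _ IsSquare]
    congr 1 <;> exact Nat.card_congr (Equiv.subtypeEquivRight fun w ↦ by tauto)
  rw [split, Nat.card_congr swap, two_mul]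

end FiniteField

/-- Let `q = p^m` with `p` an odd prime and `m` odd. The number of non-squares
`w ∈ GF(q)*` with `Tr_{q/p}(w) = 0` equals `(p^(m-1) - 1)/2`, and the number of
non-squares with `Tr_{q/p}(w) ≠ 0` equals `p^(m-1)(p-1)/2`. -/
theorem stmt6 (p m : ℕ) [Fact p.Prime] (hp : Odd p) (hm : Odd m)
    {F : Type*} [Field F] [Fintype F] [Algebra (ZMod p) F]
    (hcard : Fintype.card F = p ^ m) :
    Nat.card {w : F // w ≠ 0 ∧ ¬ IsSquare w ∧ Algebra.trace (ZMod p) F w = 0} =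
      (p ^ (m - 1) - 1) / 2 ∧
    Nat.card {w : F // w ≠ 0 ∧ ¬ IsSquare w ∧ Algebra.trace (ZMod p) F w ≠ 0} =
      p ^ (m - 1) * (p - 1) / 2 := by
  set tr := Algebra.trace (ZMod p) F
  have : FiniteDimensional (ZMod p) F := Module.Finite.of_finite
  have hrank : Module.finrank (ZMod p) F = m :=
    Nat.pow_right_injective (Fact.out : p.Prime).two_le
      ((FiniteField.pow_finrank_eq_card p F).trans hcard)
  obtain ⟨c₀, hc₀⟩ := FiniteField.exists_nonsquare (F := ZMod p) <| by
    rw [ZMod.ringChar_zmod_n]; rintro rfl; exact Nat.not_odd_iff_even.mpr even_two hp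
  have hc₀0 : c₀ ≠ 0 := fun h ↦ hc₀ (h ▸ IsSquare.zero)
  have hc := not_isSquare_algebraMap_of_odd_finrank (L := F) (hrank ▸ hm) hc₀
  have htr (x : F) : tr (algebraMap (ZMod p) F c₀ * x) = c₀ * tr x := by
    rw [← Algebra.smul_def, map_smul, smul_eq_mul]
  have hker : Nat.card {w // tr w = 0} = p ^ (m - 1) := by
    have h := Algebra.card_trace_eq_zero_mul_card (ZMod p) F
    rw [Nat.card_zmod, Nat.card_eq_fintype_card (α := F), hcard,
      ← pow_sub_one_mul hm.pos.ne'] at h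
    exact Nat.eq_of_mul_eq_mul_right (Fact.out : p.Prime).pos h
  have hzero := FiniteField.two_mul_card_nonsquare_of_mul_invariant hc (tr · = 0)
    (by simp [htr, hc₀0])
  have hnonzero := FiniteField.two_mul_card_nonsquare_of_mul_invariant hc (tr · ≠ 0)
    (by simp [htr, hc₀0])
  have hzero_total : Nat.card {w // w ≠ 0 ∧ tr w = 0} + 1 = p ^ (m - 1) :=
    hker ▸ Nat.card_subtype_ne_and_add_one (map_zero tr)
  have hnonzero_total : Nat.card {w // w ≠ 0 ∧ tr w ≠ 0} = p ^ (m - 1) * (p - 1) := by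
    rw [Nat.card_subtype_ne_and_of_not (P := (tr · ≠ 0)) (not_not.mpr (map_zero tr)),
      Algebra.card_trace_ne_zero, Nat.card_zmod, hker]
  beta_reduce at hzero hnonzero
  omega
end

section
/- Let q = 2^m with m > 1 and a ∈ GF(q) such that x² + x + a is irreducible over GF(q). In the binary code C = { ((Tr_{q/2}(ux+vy+w(x²+xy+ay²)) + h)_{(x,y)∈GF(q)²}, Tr_{q/2}(w)) : u,v,w ∈ GF(q), h ∈ GF(2) }, the number of codewords of weight 2^{2m-1} equals 2(2^{2m}-1). -/
/-!
Write `S(f) = ∑ (-1)^f(z)`, so that a binary word has weight `(n - S)/2`. For `w = 0` a codeword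
is affine in `(x, y)`, hence balanced unless `u = v = 0`. For `w ≠ 0`, in characteristic 2 the
polarization of `w(x² + xy + ay²)` is the nondegenerate pairing `w(xy' + x'y)`, so
`S² = ∑_d ∑_z (-1)^(f(z + d) + f(z)) = 2^{2m}`; weight `2^{2m-1}` would force `S ∈ {0, 2}`,
impossible once `m > 1`. So the codewords of that weight are exactly those with `w = 0`,
`(u, v) ≠ 0`, and they are pairwise distinct.
-/

open Finset

def signChar : AddChar (ZMod 2) ℤ where
  toFun t := if t = 0 then 1 else -1
  map_zero_eq_one' := rfl
  map_add_eq_mul' := by decide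

lemma signChar_injective : Function.Injective signChar := by decide

section signSum

variable {ι V : Type*} [Fintype ι] [AddCommGroup V] [Fintype V]

def signSum (f : ι → ZMod 2) : ℤ := ∑ i, signChar (f i)

lemma two_mul_hammingNorm_eq (c : ι → ZMod 2) :
    2 * (hammingNorm c : ℤ) = Fintype.card ι - signSum c := by
  have hsign : ∀ t : ZMod 2, signChar t = 1 - 2 * if t ≠ 0 then 1 else 0 := by decide
  simp only [signSum, hsign, hammingNorm, card_filter, sum_sub_distrib, ← mul_sum, sum_const,
    card_univ, nsmul_eq_mul, mul_one]
  push_cast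
  ring

lemma signSum_sumElim_unit (f : ι → ZMod 2) (t : ZMod 2) :
    signSum (Sum.elim f fun _ : Unit => t) = signSum f + signChar t := by
  simp [signSum, Fintype.sum_sum_type]

lemma signSum_add_const_eq_zero_iff (L : V →+ ZMod 2) (c : ZMod 2) :
    signSum (fun z => L z + c) = 0 ↔ L ≠ 0 := by
  have hsplit :
      signSum (fun z => L z + c) = (∑ z, signChar.compAddMonoidHom L z) * signChar c := by
    simp [signSum, AddChar.map_add_eq_mul, sum_mul]
  have hinj := signChar.compAddMonoidHom_injective_right signChar_injective (A := V)
  rw [hsplit, mul_eq_zero, or_iff_left ((by decide : ∀ t : ZMod 2, signChar t ≠ 0) c),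
    AddChar.sum_eq_zero_iff_ne_zero, ← hinj.ne_iff]
  rfl

lemma sq_signSum_eq_card (f : V → ZMod 2)
    (hf : ∀ d ≠ 0, signSum (fun z => f (z + d) + f z) = 0) :
    signSum f ^ 2 = Fintype.card V := by
  calc signSum f ^ 2 = ∑ z, ∑ d, signChar (f (z + d) + f z) := by
        rw [sq, signSum, sum_mul_sum]
        refine sum_congr rfl fun z _ => ?_
        rw [← Equiv.sum_comp (Equiv.addLeft z)]
        simp [AddChar.map_add_eq_mul, add_comm]
    _ = ∑ d, signSum (fun z => f (z + d) + f z) := sum_comm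
    _ = Fintype.card V := by
        rw [Fintype.sum_eq_single 0 hf]
        simp [signSum, CharTwo.add_self_eq_zero]

end signSum

section trace

variable {F : Type*} [Field F] [Algebra (ZMod 2) F]

local notation "tr" => Algebra.trace (ZMod 2) F

lemma exists_trace_mul_ne_zero [Finite F] {w : F} (hw : w ≠ 0) : ∃ x, tr (w * x) ≠ 0 := by
  have : FiniteDimensional (ZMod 2) F := Module.Finite.of_finite
  obtain ⟨x, hx⟩ := Algebra.trace_surjective (ZMod 2) F 1
  exact ⟨w⁻¹ * x, by rw [mul_inv_cancel_left₀ hw, hx]; exact one_ne_zero⟩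

variable (F) in
noncomputable def traceDot : F × F →+ F × F →+ ZMod 2 :=
  AddMonoidHom.mk' (fun p => AddMonoidHom.mk' (fun z => tr (p.1 * z.1 + p.2 * z.2)) fun z z' => by
      simp only [Prod.fst_add, Prod.snd_add, ← map_add]
      ring_nf)
    fun p p' => by
      ext z
      simp only [Prod.fst_add, Prod.snd_add, AddMonoidHom.add_apply, AddMonoidHom.mk'_apply,
        ← map_add]
      ring_nf

lemma traceDot_apply (p z : F × F) : traceDot F p z = tr (p.1 * z.1 + p.2 * z.2) := rfl

lemma traceDot_injective [Finite F] : Function.Injective (traceDot F) := by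
  refine (injective_iff_map_eq_zero _).2 fun p hp => ?_
  by_contra hne
  have hcoord : p.1 ≠ 0 ∨ p.2 ≠ 0 := by
    contrapose! hne
    exact Prod.ext hne.1 hne.2
  rcases hcoord with h1 | h2
  · obtain ⟨x, hx⟩ := exists_trace_mul_ne_zero h1
    exact hx (by simpa [traceDot_apply] using DFunLike.congr_fun hp (x, 0))
  · obtain ⟨y, hy⟩ := exists_trace_mul_ne_zero h2
    exact hy (by simpa [traceDot_apply] using DFunLike.congr_fun hp (0, y))

def quadric (a u v w : F) (z : F × F) : F :=
  u * z.1 + v * z.2 + w * (z.1 ^ 2 + z.1 * z.2 + a * z.2 ^ 2)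

lemma quadric_add_add_quadric (a u v w : F) (z d : F × F) :
    quadric a u v w (z + d) + quadric a u v w z =
      quadric a u v w d + w * (d.2 * z.1 + d.1 * z.2) := by
  have : CharP F 2 := charP_of_injective_algebraMap' (ZMod 2) 2
  simp only [quadric, Prod.fst_add, Prod.snd_add]
  linear_combination
    (u * z.1 + v * z.2 + w * (z.1 ^ 2 + z.1 * z.2 + a * z.2 ^ 2 + z.1 * d.1 + a * z.2 * d.2)) *
      CharTwo.two_eq_zero (R := F)

noncomputable def codeword (a u v w : F) (h : ZMod 2) : (F × F) ⊕ Unit → ZMod 2 :=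
  Sum.elim (fun z => tr (quadric a u v w z) + h) fun _ => tr w

lemma sq_signSum_quadric [Fintype F] (a u v : F) {w : F} (hw : w ≠ 0) (h : ZMod 2) :
    signSum (fun z => tr (quadric a u v w z) + h) ^ 2 = Fintype.card (F × F) := by
  refine sq_signSum_eq_card _ fun d hd => ?_
  have hpolar : ∀ z, (tr (quadric a u v w (z + d)) + h) + (tr (quadric a u v w z) + h) =
      traceDot F (w * d.2, w * d.1) z + tr (quadric a u v w d) := fun z => by
    rw [add_add_add_comm, CharTwo.add_self_eq_zero, add_zero, ← map_add,
      quadric_add_add_quadric, map_add, traceDot_apply, add_comm, mul_add, mul_assoc, mul_assoc]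
  simp only [hpolar]
  rw [signSum_add_const_eq_zero_iff, map_ne_zero_iff _ traceDot_injective]
  simpa [Prod.ext_iff, hw, and_comm] using hd

lemma signSum_quadric_zero_eq_zero_iff [Fintype F] (a u v : F) (h : ZMod 2) :
    signSum (fun z => tr (quadric a u v 0 z) + h) = 0 ↔ (u, v) ≠ 0 := by
  have hlin : ∀ z, quadric a u v 0 z = u * z.1 + v * z.2 := fun z => by simp [quadric]
  simp only [hlin]
  exact (signSum_add_const_eq_zero_iff (traceDot F (u, v)) h).trans
    (map_ne_zero_iff _ traceDot_injective)

lemma hammingNorm_codeword_eq_iff_signSum [Fintype F] {m : ℕ} (hm : 0 < m)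
    (hcard : Fintype.card F = 2 ^ m) (a u v w : F) (h : ZMod 2) :
    hammingNorm (codeword a u v w h) = 2 ^ (2 * m - 1) ↔
      signSum (fun z => tr (quadric a u v w z) + h) + signChar (tr w) = 1 := by
  have hcardC : (Fintype.card ((F × F) ⊕ Unit) : ℤ) = 2 * 2 ^ (2 * m - 1) + 1 := by
    rw [← pow_succ', Nat.sub_add_cancel (by omega)]
    simp [hcard, two_mul, pow_add]
  have h2 := two_mul_hammingNorm_eq (codeword a u v w h)
  rw [hcardC, codeword, signSum_sumElim_unit, ← codeword] at h2
  constructor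
  · intro hwt
    rw [hwt] at h2
    push_cast at h2
    linarith
  · intro hS
    exact_mod_cast (by linarith : (hammingNorm (codeword a u v w h) : ℤ) = 2 ^ (2 * m - 1))

lemma hammingNorm_codeword_eq_iff [Fintype F] {m : ℕ} (hm : 1 < m)
    (hcard : Fintype.card F = 2 ^ m) (a u v w : F) (h : ZMod 2) :
    hammingNorm (codeword a u v w h) = 2 ^ (2 * m - 1) ↔ w = 0 ∧ (u, v) ≠ 0 := by
  rw [hammingNorm_codeword_eq_iff_signSum (by omega) hcard]
  by_cases hw : w = 0
  · subst hw
    simp [signSum_quadric_zero_eq_zero_iff]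
  · simp only [hw, false_and, iff_false]
    intro hS
    have hsq := sq_signSum_quadric a u v hw h
    have h16 : (16 : ℕ) ≤ Fintype.card (F × F) := by
      rw [Fintype.card_prod, hcard, ← pow_add]
      exact le_trans (by norm_num) (Nat.pow_le_pow_right (by norm_num) (by omega : 4 ≤ m + m))
    have h16' : (16 : ℤ) ≤ Fintype.card (F × F) := by exact_mod_cast h16
    rcases (by decide : ∀ t : ZMod 2, signChar t = 1 ∨ signChar t = -1) (tr w) with h1 | h1 <;>
      nlinarith

lemma codeword_zero_injective [Finite F] (a : F) :
    Function.Injective fun p : (F × F) × ZMod 2 => codeword a p.1.1 p.1.2 0 p.2 := by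
  rintro ⟨p, h⟩ ⟨p', h'⟩ heq
  obtain rfl : h = h' := by simpa [codeword, quadric] using congr_fun heq (Sum.inl 0)
  have hdot : traceDot F p = traceDot F p' := by
    ext z
    simpa [codeword, quadric, traceDot_apply] using congr_fun heq (Sum.inl z)
  rw [traceDot_injective hdot]

end trace

theorem stmt17_general (m : ℕ) (hm : 1 < m) {F : Type*} [Field F] [Fintype F]
    [Algebra (ZMod 2) F] (hcard : Fintype.card F = 2 ^ m) (a : F)
    (C : Set ((F × F) ⊕ Unit → ZMod 2))
    (hC : C = {c | ∃ (u v w : F) (h : ZMod 2), c = Sum.elim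
        (fun xy : F × F => Algebra.trace (ZMod 2) F
          (u * xy.1 + v * xy.2 + w * (xy.1 ^ 2 + xy.1 * xy.2 + a * xy.2 ^ 2)) + h)
        (fun _ : Unit => Algebra.trace (ZMod 2) F w)}) :
    Nat.card {c : (F × F) ⊕ Unit → ZMod 2 // c ∈ C ∧ hammingNorm c = 2 ^ (2 * m - 1)} =
      2 * (2 ^ (2 * m) - 1) := by
  have hweight := hammingNorm_codeword_eq_iff hm hcard a
  let toCode (p : {p : F × F // p ≠ 0} × ZMod 2) :
      {c : (F × F) ⊕ Unit → ZMod 2 // c ∈ C ∧ hammingNorm c = 2 ^ (2 * m - 1)} :=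
    ⟨codeword a p.1.1.1 p.1.1.2 0 p.2, hC ▸ ⟨_, _, _, _, rfl⟩,
      (hweight _ _ _ _).2 ⟨rfl, p.1.2⟩⟩
  have hinj : Function.Injective toCode := by
    rintro ⟨⟨p, hp⟩, h⟩ ⟨⟨p', hp'⟩, h'⟩ hpq
    obtain ⟨rfl, rfl⟩ := Prod.mk.inj <|
      codeword_zero_injective a (a₁ := (p, h)) (a₂ := (p', h')) (congrArg Subtype.val hpq)
    rfl
  have hsurj : Function.Surjective toCode := by
    rintro ⟨c, hc, hwt⟩
    rw [hC] at hc
    obtain ⟨u, v, w, h, rfl⟩ := hc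
    obtain ⟨rfl, huv⟩ := (hweight u v w h).1 hwt
    exact ⟨(⟨(u, v), huv⟩, h), rfl⟩
  classical
  rw [← Nat.card_congr (Equiv.ofBijective toCode ⟨hinj, hsurj⟩), Nat.card_prod]
  simp only [Nat.card_eq_fintype_card, Fintype.card_subtype_compl, Fintype.card_prod,
    Fintype.card_unique, hcard, ZMod.card]
  rw [mul_comm, ← pow_add, ← two_mul]

/-- In the binary subfield code of the elliptic quadric code, the number of codewords of
Hamming weight `2^(2m-1)` equals `2(2^(2m) - 1)`. -/
theorem stmt17 (m : ℕ) (hm : 1 < m) {F : Type*} [Field F] [Fintype F] [DecidableEq F]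
    [Algebra (ZMod 2) F] (hcard : Fintype.card F = 2 ^ m) (a : F)
    (hirr : Irreducible (Polynomial.X ^ 2 + Polynomial.X + Polynomial.C a))
    (C : Set ((F × F) ⊕ Unit → ZMod 2))
    (hC : C = {c | ∃ (u v w : F) (h : ZMod 2), c = Sum.elim
        (fun xy : F × F => Algebra.trace (ZMod 2) F
          (u * xy.1 + v * xy.2 + w * (xy.1 ^ 2 + xy.1 * xy.2 + a * xy.2 ^ 2)) + h)
        (fun _ : Unit => Algebra.trace (ZMod 2) F w)}) :
    Nat.card {c : (F × F) ⊕ Unit → ZMod 2 // c ∈ C ∧ hammingNorm c = 2 ^ (2 * m - 1)} =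
      2 * (2 ^ (2 * m) - 1) :=
  stmt17_general m hm hcard a C hC
end
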